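/- Let N ≥ 2 and let Ω ⊂ ℝ^N be a nonempty bounded open convex set. Then for every t ∈ [0, ∞), the set Ω^t is Lebesgue measurable and Vol(Ω^t) = Vol(Ω), where Vol denotes Lebesgue measure on ℝ^N. -/

import Mathlib

open MeasureTheory Set

/-- The lower endpoint `y₁(x') = inf { y : (x', y) ∈ Ω }` of the vertical section of `Ω`. -/
noncomputable def ySecInf {E : Type*} (Ω : Set (E × ℝ)) (x' : E) : ℝ :=
  sInf {y : ℝ | (x', y) ∈ Ω}

/-- The upper endpoint `y₂(x') = sup { y : (x', y) ∈ Ω }` of the vertical section of `Ω`. -/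
noncomputable def ySecSup {E : Type*} (Ω : Set (E × ℝ)) (x' : E) : ℝ :=
  sSup {y : ℝ | (x', y) ∈ Ω}

/-- The continuous Steiner symmetrization `Ω^t` of `Ω` with respect to the hyperplane
`{x_N = 0}`: `Ω^t = {(x', y) : x' ∈ Ω', y₁^t(x') < y < y₂^t(x')}` where
`y₁^t = (y₁ - y₂ + e^{-t}(y₁ + y₂))/2` and `y₂^t = (y₂ - y₁ + e^{-t}(y₁ + y₂))/2`. -/
noncomputable def steinerSym {E : Type*} (Ω : Set (E × ℝ)) (t : ℝ) : Set (E × ℝ) :=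
  {q : E × ℝ | q.1 ∈ Prod.fst '' Ω ∧
    (ySecInf Ω q.1 - ySecSup Ω q.1 + Real.exp (-t) * (ySecInf Ω q.1 + ySecSup Ω q.1)) / 2
      < q.2 ∧
    q.2 <
    (ySecSup Ω q.1 - ySecInf Ω q.1 + Real.exp (-t) * (ySecInf Ω q.1 + ySecSup Ω q.1)) / 2}

/-! Over each point `x'` of `Ω'` the vertical section of `Ω` is the interval `(y₁(x'), y₂(x'))`,
and `Ω^t` is obtained from `Ω` by translating that section by `(e^{-t} - 1)(y₁ + y₂)/2`, which
does not change its length; Fubini's theorem then gives `Vol(Ω^t) = Vol(Ω)`. As for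
measurability, `y₁` is convex and `y₂` concave on the open convex set `Ω'`, so both are
continuous there and `Ω^t` is open. -/

theorem IsOpen.eq_Ioo_csInf_csSup {α : Type*} [ConditionallyCompleteLinearOrder α]
    [TopologicalSpace α] [OrderTopology α] [DenselyOrdered α] [NoMinOrder α] [NoMaxOrder α]
    {s : Set α} (hs : IsOpen s) (hc : IsConnected s) (hb : BddBelow s) (ha : BddAbove s) :
    s = Ioo (sInf s) (sSup s) :=
  (interior_Icc (a := sInf s) ▸ hs.subset_interior_iff.2 (subset_Icc_csInf_csSup hb ha)).antisymm
    (hc.Ioo_csInf_csSup_subset hb ha)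

theorem IsOpen.regionBetween {α : Type*} [TopologicalSpace α] {f g : α → ℝ} {s : Set α}
    (hs : IsOpen s) (hf : ContinuousOn f s) (hg : ContinuousOn g s) :
    IsOpen (regionBetween f g s) := by
  have hf' : ContinuousOn (fun p : α × ℝ ↦ f p.1) (Prod.fst ⁻¹' s) :=
    hf.comp continuousOn_fst (mapsTo_preimage _ _)
  have hg' : ContinuousOn (fun p : α × ℝ ↦ g p.1) (Prod.fst ⁻¹' s) :=
    hg.comp continuousOn_fst (mapsTo_preimage _ _)
  have hcont : ContinuousOn (fun p : α × ℝ ↦ (p.2 - f p.1, g p.1 - p.2)) (Prod.fst ⁻¹' s) :=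
    (continuousOn_snd.sub hf').prodMk (hg'.sub continuousOn_snd)
  convert hcont.isOpen_inter_preimage (hs.preimage continuous_fst)
    ((isOpen_Ioi (a := 0)).prod (isOpen_Ioi (a := 0))) using 1
  ext p
  simp [_root_.regionBetween, sub_pos]

theorem volume_regionBetween_add {α : Type*} [MeasurableSpace α] {μ : Measure α} [SFinite μ]
    {f g h : α → ℝ} {s : Set α} (hf : AEMeasurable f (μ.restrict s))
    (hg : AEMeasurable g (μ.restrict s)) (hh : AEMeasurable h (μ.restrict s))
    (hs : MeasurableSet s) :
    μ.prod volume (regionBetween (f + h) (g + h) s) = μ.prod volume (regionBetween f g s) := by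
  rw [volume_regionBetween_eq_lintegral (hf.add hh) (hg.add hh) hs,
    volume_regionBetween_eq_lintegral hf hg hs, add_sub_add_right_eq_sub]

open scoped Pointwise
open Bornology

section Sections

variable {E : Type*}

section Convexity

variable [AddCommGroup E] [Module ℝ E] {Ω : Set (E × ℝ)}

theorem Convex.smul_preimage_prodMk_add_subset (hΩ : Convex ℝ Ω) {a b : ℝ} (ha : 0 ≤ a)
    (hb : 0 ≤ b) (hab : a + b = 1) (x y : E) :
    a • (Prod.mk x ⁻¹' Ω) + b • (Prod.mk y ⁻¹' Ω) ⊆ Prod.mk (a • x + b • y) ⁻¹' Ω := by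
  rintro _ ⟨_, ⟨u, hu, rfl⟩, _, ⟨v, hv, rfl⟩, rfl⟩
  simpa using hΩ hu hv ha hb hab

theorem Convex.preimage_prodMk (hΩ : Convex ℝ Ω) (x : E) : Convex ℝ (Prod.mk x ⁻¹' Ω) :=
  convex_iff_pointwise_add_subset.2 fun _ _ ha hb hab ↦ by
    simpa [← add_smul, hab] using hΩ.smul_preimage_prodMk_add_subset ha hb hab x x

theorem concaveOn_ySecSup (hΩ : Convex ℝ Ω) (hbdd : ∀ x, BddAbove (Prod.mk x ⁻¹' Ω)) :
    ConcaveOn ℝ (Prod.fst '' Ω) (ySecSup Ω) := by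
  refine ⟨hΩ.linear_image (LinearMap.fst ℝ E ℝ), ?_⟩
  rintro x ⟨⟨x, u⟩, hu, rfl⟩ y ⟨⟨y, v⟩, hv, rfl⟩ a b ha hb hab
  have hx : (a • (Prod.mk x ⁻¹' Ω)).Nonempty := Nonempty.smul_set ⟨u, hu⟩
  have hy : (b • (Prod.mk y ⁻¹' Ω)).Nonempty := Nonempty.smul_set ⟨v, hv⟩
  calc a • ySecSup Ω x + b • ySecSup Ω y
      = sSup (a • (Prod.mk x ⁻¹' Ω) + b • (Prod.mk y ⁻¹' Ω)) := by
        rw [csSup_add hx ((hbdd x).smul_of_nonneg ha) hy ((hbdd y).smul_of_nonneg hb),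
          Real.sSup_smul_of_nonneg ha, Real.sSup_smul_of_nonneg hb]
        rfl
    _ ≤ ySecSup Ω (a • x + b • y) :=
        csSup_le_csSup (hbdd _) (hx.add hy) (hΩ.smul_preimage_prodMk_add_subset ha hb hab x y)

theorem convexOn_ySecInf (hΩ : Convex ℝ Ω) (hbdd : ∀ x, BddBelow (Prod.mk x ⁻¹' Ω)) :
    ConvexOn ℝ (Prod.fst '' Ω) (ySecInf Ω) := by
  refine ⟨hΩ.linear_image (LinearMap.fst ℝ E ℝ), ?_⟩
  rintro x ⟨⟨x, u⟩, hu, rfl⟩ y ⟨⟨y, v⟩, hv, rfl⟩ a b ha hb hab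
  have hx : (a • (Prod.mk x ⁻¹' Ω)).Nonempty := Nonempty.smul_set ⟨u, hu⟩
  have hy : (b • (Prod.mk y ⁻¹' Ω)).Nonempty := Nonempty.smul_set ⟨v, hv⟩
  calc ySecInf Ω (a • x + b • y)
      ≤ sInf (a • (Prod.mk x ⁻¹' Ω) + b • (Prod.mk y ⁻¹' Ω)) :=
        csInf_le_csInf (hbdd _) (hx.add hy) (hΩ.smul_preimage_prodMk_add_subset ha hb hab x y)
    _ = a • ySecInf Ω x + b • ySecInf Ω y := by
        rw [csInf_add hx ((hbdd x).smul_of_nonneg ha) hy ((hbdd y).smul_of_nonneg hb),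
          Real.sInf_smul_of_nonneg ha, Real.sInf_smul_of_nonneg hb]
        rfl

end Convexity

theorem Bornology.IsBounded.preimage_prodMk {β : Type*} [Bornology E] [Bornology β]
    {s : Set (E × β)} (hs : IsBounded s) (x : E) : IsBounded (Prod.mk x ⁻¹' s) :=
  hs.image_snd.subset fun y hy ↦ ⟨(x, y), hy, rfl⟩

variable [NormedAddCommGroup E] [NormedSpace ℝ E] {Ω : Set (E × ℝ)}

theorem preimage_prodMk_eq_Ioo (hop : IsOpen Ω) (hconv : Convex ℝ Ω) (hbd : IsBounded Ω)
    {x : E} (hx : x ∈ Prod.fst '' Ω) :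
    Prod.mk x ⁻¹' Ω = Ioo (ySecInf Ω x) (ySecSup Ω x) := by
  obtain ⟨⟨x, y⟩, hy, rfl⟩ := hx
  exact (hop.preimage (Continuous.prodMk_right x)).eq_Ioo_csInf_csSup
    ⟨⟨y, hy⟩, (hconv.preimage_prodMk x).isPreconnected⟩ (hbd.preimage_prodMk x).bddBelow
    (hbd.preimage_prodMk x).bddAbove

theorem eq_regionBetween_ySecInf_ySecSup (hop : IsOpen Ω) (hconv : Convex ℝ Ω)
    (hbd : IsBounded Ω) : Ω = regionBetween (ySecInf Ω) (ySecSup Ω) (Prod.fst '' Ω) := by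
  ext ⟨x, y⟩
  constructor
  · intro h
    have hx : x ∈ Prod.fst '' Ω := ⟨_, h, rfl⟩
    exact ⟨hx, preimage_prodMk_eq_Ioo hop hconv hbd hx ▸ h⟩
  · rintro ⟨hx, hy⟩
    rwa [← preimage_prodMk_eq_Ioo hop hconv hbd hx] at hy

variable [FiniteDimensional ℝ E]

theorem continuousOn_ySecInf (hop : IsOpen Ω) (hconv : Convex ℝ Ω) (hbd : IsBounded Ω) :
    ContinuousOn (ySecInf Ω) (Prod.fst '' Ω) :=
  (convexOn_ySecInf hconv fun x ↦ (hbd.preimage_prodMk x).bddBelow).continuousOn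
    (isOpenMap_fst Ω hop)

theorem continuousOn_ySecSup (hop : IsOpen Ω) (hconv : Convex ℝ Ω) (hbd : IsBounded Ω) :
    ContinuousOn (ySecSup Ω) (Prod.fst '' Ω) :=
  (concaveOn_ySecSup hconv fun x ↦ (hbd.preimage_prodMk x).bddAbove).continuousOn
    (isOpenMap_fst Ω hop)

end Sections

theorem steinerSym_eq_regionBetween {E : Type*} (Ω : Set (E × ℝ)) (t : ℝ) :
    steinerSym Ω t =
      regionBetween (ySecInf Ω + ((Real.exp (-t) - 1) / 2) • (ySecInf Ω + ySecSup Ω))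
      (ySecSup Ω + ((Real.exp (-t) - 1) / 2) • (ySecInf Ω + ySecSup Ω)) (Prod.fst '' Ω) := by
  ext q
  simp only [steinerSym, regionBetween, mem_ofPred_eq, mem_Ioo, Pi.add_apply, Pi.smul_apply,
    smul_eq_mul]
  ring_nf

theorem steiner_volume_preserving_general
    (N : ℕ)
    (Ω : Set (EuclideanSpace ℝ (Fin (N - 1)) × ℝ))
    (hbd : Bornology.IsBounded Ω) (hop : IsOpen Ω)
    (hconv : Convex ℝ Ω) (t : ℝ) :
    MeasurableSet (steinerSym Ω t) ∧ volume (steinerSym Ω t) = volume Ω := by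
  have hU : IsOpen (Prod.fst '' Ω) := isOpenMap_fst Ω hop
  have hinf := continuousOn_ySecInf hop hconv hbd
  have hsup := continuousOn_ySecSup hop hconv hbd
  have hshift := (hinf.add hsup).const_smul ((Real.exp (-t) - 1) / 2)
  rw [steinerSym_eq_regionBetween]
  refine ⟨(hU.regionBetween (hinf.add hshift) (hsup.add hshift)).measurableSet, ?_⟩
  conv_rhs => rw [eq_regionBetween_ySecInf_ySecSup hop hconv hbd]
  rw [Measure.volume_eq_prod]
  exact volume_regionBetween_add (hinf.aemeasurable hU.measurableSet)
    (hsup.aemeasurable hU.measurableSet) (hshift.aemeasurable hU.measurableSet) hU.measurableSet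

/-- **The continuous Steiner symmetrization of a convex set preserves volume.**
For a nonempty bounded open convex `Ω ⊂ ℝ^{N-1} × ℝ` and every `t ≥ 0`, the set `Ω^t` is
Lebesgue measurable and has the same Lebesgue measure as `Ω`. -/
theorem steiner_volume_preserving
    (N : ℕ) (hN : 2 ≤ N)
    (Ω : Set (EuclideanSpace ℝ (Fin (N - 1)) × ℝ))
    (hne : Ω.Nonempty) (hbd : Bornology.IsBounded Ω) (hop : IsOpen Ω)
    (hconv : Convex ℝ Ω) (t : ℝ) (ht : 0 ≤ t) :
    MeasurableSet (steinerSym Ω t) ∧ volume (steinerSym Ω t) = volume Ω :=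
  steiner_volume_preserving_general N Ω hbd hop hconv t
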